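/- arXiv:1611.04069 — 5 statements merged into one kernel-verified Lean document; each statement's English description precedes it below -/
import Mathlib

section
/- Fix E ∈ ℂ^{m×M}, a unit vector d ∈ ℂ^m, λ > 0, and a > λ. The vector ĉ ∈ ℂ^M defined coordinatewise by ĉ_j = min(|H_λ(b)_j|, a) · e^{i∠b_j}, where b = E^H d and H_λ zeros out entries of b with magnitude less than λ and leaves other entries unchanged, is a global minimizer of the function c ↦ ‖E − d c^H‖_F² + λ² ‖c‖₀ subject to ‖c‖_∞ ≤ a. -/
/-!
Since `‖d‖ = 1`, expanding the Frobenius norm gives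
`‖E - d cᴴ‖² = ‖E‖² + ∑ⱼ (|cⱼ|² - 2 Re(conj bⱼ cⱼ))` with `b = Eᴴ d`, so the objective splits
into independent scalar problems. By Cauchy–Schwarz each scalar cost is bounded below by
`(|z| - |b|)² - |b|² + λ² [z ≠ 0]`, a function of `|z|` alone, with equality when `z` has the
phase of `b`. Minimizing that radial function over `[0, a]` is a one-variable exercise whose
answer is the clipped hard-threshold radius.
-/

open Finset ComplexConjugate Matrix

namespace SparseCoding

/-- The phase `e^{i∠b}`, with the convention `e^{i∠0} = 1`. -/
noncomputable def phase (b : ℂ) : ℂ :=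
  if b = 0 then 1 else b / (‖b‖ : ℂ)

/-- The update `min(|H_λ(b)|, a) e^{i∠b}` of a single coefficient. -/
noncomputable def hardThreshold (lam a : ℝ) (b : ℂ) : ℂ :=
  (min ‖if ‖b‖ < lam then (0 : ℂ) else b‖ a : ℝ) * phase b

noncomputable def coordCost (lam : ℝ) (b z : ℂ) : ℝ :=
  ‖z‖ ^ 2 - 2 * (conj b * z).re + lam ^ 2 * (if z ≠ 0 then 1 else 0)

noncomputable def radialCost (lam B t : ℝ) : ℝ :=
  t ^ 2 - 2 * B * t + lam ^ 2 * (if t ≠ 0 then 1 else 0)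

lemma norm_phase (b : ℂ) : ‖phase b‖ = 1 := by
  by_cases hb : b = 0 <;> simp [phase, hb]

lemma conj_mul_phase (b : ℂ) : conj b * phase b = ‖b‖ := by
  by_cases hb : b = 0
  · simp [phase, hb]
  · have hnorm : (‖b‖ : ℂ) ≠ 0 := by exact_mod_cast norm_ne_zero_iff.mpr hb
    rw [phase, if_neg hb, ← mul_div_assoc, mul_comm, Complex.mul_conj,
      Complex.normSq_eq_norm_sq, Complex.ofReal_pow, sq, mul_div_cancel_right₀ _ hnorm]

lemma coordCost_ofReal_mul_phase (lam : ℝ) (b : ℂ) {r : ℝ} (hr : 0 ≤ r) :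
    coordCost lam b (r * phase b) = radialCost lam ‖b‖ r := by
  have hnorm : ‖(r : ℂ) * phase b‖ = r := by
    rw [norm_mul, norm_phase, mul_one, Complex.norm_real, Real.norm_of_nonneg hr]
  have hre : (conj b * (r * phase b)).re = ‖b‖ * r := by
    rw [mul_left_comm, conj_mul_phase, ← Complex.ofReal_mul, Complex.ofReal_re, mul_comm]
  have hzero : (r : ℂ) * phase b ≠ 0 ↔ r ≠ 0 := by
    rw [← norm_ne_zero_iff, hnorm]
  simp only [coordCost, radialCost, hnorm, hre, hzero]
  ring

lemma radialCost_norm_le_coordCost (lam : ℝ) (b z : ℂ) :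
    radialCost lam ‖b‖ ‖z‖ ≤ coordCost lam b z := by
  have hre : (conj b * z).re ≤ ‖b‖ * ‖z‖ := by
    simpa only [norm_mul, Complex.norm_conj] using Complex.re_le_norm (conj b * z)
  simp only [radialCost, coordCost, ne_eq, norm_eq_zero]
  linarith

lemma radialCost_hardThreshold_le {lam a B t : ℝ} (hlam : 0 ≤ lam) (ha : lam ≤ a)
    (hB : 0 ≤ B) (ht₀ : 0 ≤ t) (hta : t ≤ a) :
    radialCost lam B (min (if B < lam then 0 else B) a) ≤ radialCost lam B t := by
  rcases lt_or_ge B lam with hBlam | hlamB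
  · rw [if_pos hBlam, min_eq_left (ht₀.trans hta)]
    -- for `t ≠ 0`: `t² - 2Bt + λ² ≥ (t - λ)²` because `B < λ`
    by_cases ht : t = 0
    · simp [radialCost, ht]
    · simp only [radialCost, ht, ne_eq, not_false_eq_true, if_true, not_true_eq_false, if_false]
      nlinarith [sq_nonneg (t - lam)]
  · rw [if_neg hlamB.not_gt]
    set r := min B a
    have hlam_r : lam ≤ r := le_min hlamB ha
    have hr_B : r ≤ B := min_le_left B a
    have hcost_r : radialCost lam B r ≤ r ^ 2 - 2 * B * r + lam ^ 2 := by
      unfold radialCost; split_ifs <;> nlinarith [sq_nonneg lam]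
    refine hcost_r.trans ?_
    by_cases ht : t = 0
    · simp only [radialCost, ht, ne_eq, not_true_eq_false, if_false]
      nlinarith [mul_le_mul hlam_r hlamB hlam (hlam.trans hlam_r)]
    · simp only [radialCost, ht, ne_eq, not_false_eq_true, if_true]
      -- `(r - B)² ≤ (t - B)²`: either `r = B`, or `r = a` and `t ≤ a < B`
      rcases min_cases B a with ⟨hrB, -⟩ | ⟨hra, haB⟩ <;> nlinarith [sq_nonneg (t - B)]

lemma norm_hardThreshold (lam : ℝ) {a : ℝ} (ha : 0 ≤ a) (b : ℂ) :
    ‖hardThreshold lam a b‖ = min ‖if ‖b‖ < lam then (0 : ℂ) else b‖ a := by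
  rw [hardThreshold, norm_mul, norm_phase, mul_one, Complex.norm_real,
    Real.norm_of_nonneg (le_min (norm_nonneg _) ha)]

lemma norm_hardThreshold_le (lam : ℝ) {a : ℝ} (ha : 0 ≤ a) (b : ℂ) :
    ‖hardThreshold lam a b‖ ≤ a :=
  (norm_hardThreshold lam ha b).trans_le (min_le_right _ _)

lemma coordCost_hardThreshold_le {lam a : ℝ} (hlam : 0 ≤ lam) (ha : lam ≤ a) (b : ℂ)
    {z : ℂ} (hz : ‖z‖ ≤ a) :
    coordCost lam b (hardThreshold lam a b) ≤ coordCost lam b z := by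
  have hthreshold : ‖if ‖b‖ < lam then (0 : ℂ) else b‖ = if ‖b‖ < lam then 0 else ‖b‖ := by
    split_ifs <;> simp
  calc coordCost lam b (hardThreshold lam a b)
      = radialCost lam ‖b‖ (min (if ‖b‖ < lam then 0 else ‖b‖) a) := by
        rw [hardThreshold, coordCost_ofReal_mul_phase _ _ (le_min (norm_nonneg _) (hlam.trans ha)),
          hthreshold]
    _ ≤ radialCost lam ‖b‖ ‖z‖ :=
        radialCost_hardThreshold_le hlam ha (norm_nonneg b) (norm_nonneg z) hz
    _ ≤ coordCost lam b z := radialCost_norm_le_coordCost lam b z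

lemma norm_sub_mul_conj_sq (x y z : ℂ) :
    ‖x - y * conj z‖ ^ 2 = ‖x‖ ^ 2 + ‖y‖ ^ 2 * ‖z‖ ^ 2 - 2 * (x * conj y * z).re := by
  simp only [Complex.sq_norm, Complex.normSq_apply, Complex.sub_re, Complex.sub_im,
    Complex.mul_re, Complex.mul_im, Complex.conj_re, Complex.conj_im]
  ring

variable {ι κ : Type*} [Fintype ι] [Fintype κ]

lemma sum_norm_sub_mul_conj_sq (e : ι → ℂ) {d : ι → ℂ} (hd : ∑ i, ‖d i‖ ^ 2 = 1) (z : ℂ) :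
    ∑ i, ‖e i - d i * conj z‖ ^ 2
      = ∑ i, ‖e i‖ ^ 2 + (‖z‖ ^ 2 - 2 * (conj (∑ i, conj (e i) * d i) * z).re) := by
  have hcross : ∑ i, (e i * conj (d i) * z).re = (conj (∑ i, conj (e i) * d i) * z).re := by
    simp only [← Complex.re_sum, ← Finset.sum_mul, map_sum, map_mul, Complex.conj_conj]
  simp only [norm_sub_mul_conj_sq, Finset.sum_sub_distrib, Finset.sum_add_distrib,
    ← Finset.sum_mul, hd, ← Finset.mul_sum, hcross]
  ring

lemma card_support_eq_sum (c : κ → ℂ) :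
    (#{j | c j ≠ 0} : ℝ) = ∑ j, if c j ≠ 0 then 1 else 0 := by
  rw [Finset.card_filter, Nat.cast_sum]
  exact Finset.sum_congr rfl fun j _ => by split_ifs <;> simp

lemma objective_eq_sum_coordCost (E : Matrix ι κ ℂ) {d : ι → ℂ} (hd : ∑ i, ‖d i‖ ^ 2 = 1)
    (lam : ℝ) (c : κ → ℂ) :
    (∑ i, ∑ j, ‖E i j - d i * conj (c j)‖ ^ 2) + lam ^ 2 * (#{j | c j ≠ 0} : ℝ)
      = ∑ j, ∑ i, ‖E i j‖ ^ 2 + ∑ j, coordCost lam ((Eᴴ *ᵥ d) j) (c j) := by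
  have hcol (j : κ) : ∑ i, ‖E i j - d i * conj (c j)‖ ^ 2
      = ∑ i, ‖E i j‖ ^ 2 + (‖c j‖ ^ 2 - 2 * (conj ((Eᴴ *ᵥ d) j) * c j).re) :=
    sum_norm_sub_mul_conj_sq (fun i => E i j) hd (c j)
  simp only [coordCost, Finset.sum_comm (γ := ι), hcol, card_support_eq_sum, Finset.mul_sum,
    Finset.sum_add_distrib]
  ring

end SparseCoding

open SparseCoding

/-- hard-thresholding sparse coding update is a global minimizer of the
ℓ₀-penalized objective under an ℓ∞ bound. -/
theorem stmt1 (m M : ℕ) (E : Matrix (Fin m) (Fin M) ℂ) (d : Fin m → ℂ)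
    (hd : ∑ i, ‖d i‖ ^ 2 = 1) (lam a : ℝ) (hlam : 0 < lam) (ha : lam < a)
    (b : Fin M → ℂ) (hb : b = fun j => ∑ i, (starRingEnd ℂ) (E i j) * d i)
    (chat : Fin M → ℂ)
    (hchat : chat = fun j =>
      (min ‖if ‖b j‖ < lam then (0 : ℂ) else b j‖ a : ℝ) *
        (if b j = 0 then 1 else b j / (‖b j‖ : ℂ)))
    (F : (Fin M → ℂ) → ℝ)
    (hF : F = fun c => (∑ i, ∑ j, ‖E i j - d i * (starRingEnd ℂ) (c j)‖ ^ 2)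
      + lam ^ 2 * ((Finset.univ.filter (fun j => c j ≠ 0)).card : ℝ)) :
    (∀ j, ‖chat j‖ ≤ a) ∧
      ∀ c : Fin M → ℂ, (∀ j, ‖c j‖ ≤ a) → F chat ≤ F c := by
  have hb' : b = Eᴴ *ᵥ d := by
    rw [hb]; rfl
  have hchat' : chat = fun j => hardThreshold lam a (b j) := hchat
  subst hchat' hb' hF
  refine ⟨fun j => norm_hardThreshold_le lam (hlam.trans ha).le _, fun c hc => ?_⟩
  simp only [objective_eq_sum_coordCost E hd]
  gcongr with j
  exact coordCost_hardThreshold_le hlam.le ha.le _ (hc j)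
end

section
/- Fix E ∈ ℂ^{m×M}, a unit vector d ∈ ℂ^m, and λ > 0. The vector ĉ ∈ ℂ^M defined coordinatewise by ĉ_j = max(|b_j| − λ/2, 0) · e^{i∠b_j}, where b = E^H d, is the unique global minimizer of the function c ↦ ‖E − d c^H‖_F² + λ ‖c‖₁. -/
/-!
Since `‖d‖ = 1`, expanding the Frobenius norm gives
`‖E - d cᴴ‖_F² = ‖E‖_F² - ‖b‖² + ∑ⱼ |cⱼ - bⱼ|²`, so the objective splits into the scalar problems
`z ↦ |z - bⱼ|² + λ |z|`. In any real inner product space, `(b - x) / κ` is a subgradient of the norm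
at the soft threshold `x` of `b` at level `κ`; expanding `‖z - b‖²` around `x` then gives
`f x + ‖z - x‖² ≤ f z` for `f z = ‖z - b‖² + 2κ‖z‖`, which yields minimality and uniqueness at once.
-/

open Finset

section SoftThreshold

variable {V : Type*} [SeminormedAddCommGroup V] [InnerProductSpace ℝ V]

noncomputable def softThreshold (κ : ℝ) (b : V) : V :=
  (max (‖b‖ - κ) 0 / ‖b‖) • b

lemma softThreshold_of_norm_le {κ : ℝ} {b : V} (h : ‖b‖ ≤ κ) : softThreshold κ b = 0 := by
  simp [softThreshold, max_eq_right (sub_nonpos.mpr h)]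

lemma inner_sub_softThreshold_le {κ : ℝ} (hκ : 0 ≤ κ) (b z : V) :
    inner ℝ (z - softThreshold κ b) (b - softThreshold κ b) ≤
      κ * (‖z‖ - ‖softThreshold κ b‖) := by
  rcases le_or_gt ‖b‖ κ with hb | hb
  · rw [softThreshold_of_norm_le hb]
    simpa [mul_comm κ] using
      (real_inner_le_norm z b).trans (mul_le_mul_of_nonneg_left hb (norm_nonneg z))
  · have hb0 : 0 < ‖b‖ := hκ.trans_lt hb
    have hx : softThreshold κ b = ((‖b‖ - κ) / ‖b‖) • b := by
      rw [softThreshold, max_eq_left (sub_nonneg.mpr hb.le)]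
    have hbx : b - softThreshold κ b = (κ / ‖b‖) • b := by
      rw [hx, sub_div, div_self hb0.ne', sub_smul, one_smul, sub_sub_cancel]
    have hnx : ‖softThreshold κ b‖ = ‖b‖ - κ := by
      rw [hx, norm_smul, Real.norm_of_nonneg (div_nonneg (sub_nonneg.mpr hb.le) hb0.le),
        div_mul_cancel₀ _ hb0.ne']
    rw [hbx, hnx, inner_smul_right, inner_sub_left, hx, real_inner_smul_left,
      real_inner_self_eq_norm_sq]
    have hzb := real_inner_le_norm z b
    field_simp
    nlinarith

lemma norm_sub_softThreshold_sq_add_le {κ : ℝ} (hκ : 0 ≤ κ) (b z : V) :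
    ‖softThreshold κ b - b‖ ^ 2 + 2 * κ * ‖softThreshold κ b‖ + ‖z - softThreshold κ b‖ ^ 2 ≤
      ‖z - b‖ ^ 2 + 2 * κ * ‖z‖ := by
  have hsplit : z - b = (z - softThreshold κ b) - (b - softThreshold κ b) := by abel
  rw [hsplit, norm_sub_sq_real (z - _), norm_sub_rev (softThreshold κ b)]
  linarith [inner_sub_softThreshold_le hκ b z]

end SoftThreshold

lemma sum_norm_sub_mul_conj_sq {ι : Type*} [Fintype ι] (e d : ι → ℂ)
    (hd : ∑ i, ‖d i‖ ^ 2 = 1) (w : ℂ) :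
    ∑ i, ‖e i - d i * starRingEnd ℂ w‖ ^ 2 =
      ∑ i, ‖e i‖ ^ 2 - ‖∑ i, starRingEnd ℂ (e i) * d i‖ ^ 2 +
        ‖w - ∑ i, starRingEnd ℂ (e i) * d i‖ ^ 2 := by
  set β := ∑ i, starRingEnd ℂ (e i) * d i
  have hβ : starRingEnd ℂ β = ∑ i, e i * starRingEnd ℂ (d i) := by simp [β]
  simp only [Complex.sq_norm] at hd ⊢
  calc ∑ i, Complex.normSq (e i - d i * starRingEnd ℂ w)
      = ∑ i, (Complex.normSq (e i) + Complex.normSq (d i) * Complex.normSq w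
          - 2 * (e i * starRingEnd ℂ (d i) * w).re) := by
        refine sum_congr rfl fun i _ => ?_
        rw [Complex.normSq_sub, Complex.normSq_mul, Complex.normSq_conj, map_mul,
          Complex.conj_conj, mul_assoc]
    _ = ∑ i, Complex.normSq (e i) + Complex.normSq w - 2 * (starRingEnd ℂ β * w).re := by
        rw [sum_sub_distrib, sum_add_distrib, ← sum_mul, hd, one_mul, ← mul_sum,
          ← Complex.re_sum, ← sum_mul, hβ]
    _ = ∑ i, Complex.normSq (e i) - Complex.normSq β + Complex.normSq (w - β) := by
        rw [Complex.normSq_sub, mul_comm w]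
        ring

/-- soft-thresholding sparse coding update is the unique global minimizer of
the ℓ₁-penalized objective. -/
theorem stmt2 (m M : ℕ) (E : Matrix (Fin m) (Fin M) ℂ) (d : Fin m → ℂ)
    (hd : ∑ i, ‖d i‖ ^ 2 = 1) (lam : ℝ) (hlam : 0 < lam)
    (b : Fin M → ℂ) (hb : b = fun j => ∑ i, (starRingEnd ℂ) (E i j) * d i)
    (chat : Fin M → ℂ)
    (hchat : chat = fun j =>
      (max (‖b j‖ - lam / 2) 0 : ℝ) * (if b j = 0 then 1 else b j / (‖b j‖ : ℂ)))
    (F : (Fin M → ℂ) → ℝ)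
    (hF : F = fun c => (∑ i, ∑ j, ‖E i j - d i * (starRingEnd ℂ) (c j)‖ ^ 2)
      + lam * ∑ j, ‖c j‖) :
    ∀ c : Fin M → ℂ, F chat ≤ F c ∧ (F c = F chat → c = chat) := by
  have hκ : 0 ≤ lam / 2 := (half_pos hlam).le
  have hchat' : chat = fun j => softThreshold (lam / 2) (b j) := by
    subst hchat
    funext j
    by_cases hbj : b j = 0
    · simp [hbj, softThreshold, hκ]
    · simp only [div_eq_mul_inv, hbj, ↓reduceIte, softThreshold, Complex.real_smul,
        Complex.ofReal_mul, Complex.ofReal_inv]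
      ring
  have hFsum : ∀ c, F c = ∑ j, (∑ i, ‖E i j‖ ^ 2 - ‖b j‖ ^ 2) +
      ∑ j, (‖c j - b j‖ ^ 2 + 2 * (lam / 2) * ‖c j‖) := by
    intro c
    simp only [hF, hb, sum_comm (γ := Fin m), sum_norm_sub_mul_conj_sq _ d hd, ← sum_add_distrib,
      mul_sum]
    congr 1 with j
    ring
  intro c
  have hmin : F chat + ∑ j, ‖c j - chat j‖ ^ 2 ≤ F c := by
    rw [hFsum, hFsum, add_assoc, ← sum_add_distrib, hchat']
    exact add_le_add le_rfl (sum_le_sum fun j _ => norm_sub_softThreshold_sq_add_le hκ (b j) (c j))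
  have hdist : 0 ≤ ∑ j, ‖c j - chat j‖ ^ 2 := by positivity
  refine ⟨by linarith, fun heq => ?_⟩
  have hzero : ∑ j, ‖c j - chat j‖ ^ 2 = 0 := by linarith
  funext j
  rw [sum_eq_zero_iff_of_nonneg (fun j _ => by positivity)] at hzero
  simpa [sub_eq_zero] using hzero j (mem_univ j)
end

section
/- Let Y ∈ ℂ^{p×q} have singular value decomposition Y = U Σ V^H with singular values σ₁ ≥ ... ≥ σ_min(p,q), and let r ≥ 1 with E c ≠ 0 playing the role of Y. Then the matrix D̂ = (U_r Σ_r V_r^H)/‖Σ_r‖_F, where U_r Σ_r V_r^H is the truncated rank-r SVD of Y, maximizes Re(tr(D^H Y)) over all D ∈ ℂ^{p×q} with rank(D) ≤ r and ‖D‖_F = 1, and the maximal value is √(σ₁² + ... + σ_r²). -/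
/-!
Write `Y = ∑ σᵢ uᵢ vᵢᴴ` and let `P` be the orthogonal projection onto the column space of `D`.
Since `D = P D`, Cauchy–Schwarz gives
`Re tr(Dᴴ Y) = ∑ σᵢ Re ⟪uᵢ, D vᵢ⟫ ≤ ∑ σᵢ ‖P uᵢ‖ ‖D vᵢ‖ ≤ √(∑ σᵢ² ‖P uᵢ‖²) · √(∑ ‖D vᵢ‖²)`.
By Bessel, `∑ ‖D vᵢ‖² ≤ ‖D‖_F² = 1`, while the weights `‖P uᵢ‖²` lie in `[0, 1]` and sum to at
most `rank D ≤ r`; against the decreasing sequence `σᵢ²` such weights give at most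
`σ₁² + ⋯ + σ_r²`. Orthonormality of the `uᵢ` and `vᵢ` shows that the normalized truncated SVD
has unit norm and attains this value.
-/

open Finset
open scoped InnerProductSpace ComplexConjugate
open WithLp (toLp)

theorem Antitone.sum_mul_le_sum_filter_lt {n r : ℕ} {f t : Fin n → ℝ} (hf : Antitone f)
    (hf0 : ∀ i, 0 ≤ f i) (ht0 : ∀ i, 0 ≤ t i) (ht1 : ∀ i, t i ≤ 1) (ht : ∑ i, t i ≤ r) :
    ∑ i, f i * t i ≤ ∑ i ∈ univ.filter (fun i : Fin n => (i : ℕ) < r), f i := by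
  set G := univ.filter fun i : Fin n => (i : ℕ) < r
  obtain ⟨c, hc0, hc_lo, hc_hi⟩ : ∃ c, 0 ≤ c ∧ (∀ i : Fin n, (i : ℕ) < r → c ≤ f i) ∧
      (∀ i : Fin n, r ≤ (i : ℕ) → f i ≤ c) := by
    by_cases hrn : r < n
    · exact ⟨f ⟨r, hrn⟩, hf0 _, fun i hi => hf (Fin.mk_le_of_le_val hi.le),
        fun i hi => hf (Fin.le_def.mpr hi)⟩
    · exact ⟨0, le_rfl, fun i _ => hf0 i, fun i hi => absurd i.isLt (by omega)⟩
  have hcard : ∑ i, t i ≤ #G := by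
    rw [Fin.card_filter_val_lt, Nat.cast_min]
    refine le_min ((sum_le_sum fun i _ => ht1 i).trans ?_) ht
    simp
  calc ∑ i, f i * t i ≤ ∑ i : Fin n, ((if (i : ℕ) < r then f i - c else 0) + c * t i) := by
        gcongr with i
        split_ifs with hi
        · nlinarith [hc_lo i hi, ht1 i]
        · nlinarith [hc_hi i (not_lt.mp hi), ht0 i]
    _ = ∑ i ∈ G, f i - c * #G + c * ∑ i, t i := by
        rw [sum_add_distrib, ← sum_filter, sum_sub_distrib, sum_const, ← mul_sum, nsmul_eq_mul,
          mul_comm]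
    _ ≤ ∑ i ∈ G, f i := by nlinarith [mul_le_mul_of_nonneg_left hcard hc0]

theorem sum_filter_lt_sq_pos {n r : ℕ} {σ : Fin n → ℝ} (hσ : Antitone σ) (hσ0 : ∀ i, 0 ≤ σ i)
    (hr : 1 ≤ r) (hne : σ ≠ 0) :
    0 < ∑ i ∈ univ.filter (fun i : Fin n => (i : ℕ) < r), σ i ^ 2 := by
  obtain ⟨i, hi⟩ := Function.ne_iff.mp hne
  have hn : 0 < n := i.pos
  have hmem : (⟨0, hn⟩ : Fin n) ∈ univ.filter (fun i : Fin n => (i : ℕ) < r) := by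
    simp only [mem_filter, mem_univ, true_and]
    omega
  refine sum_pos' (fun j _ => sq_nonneg _) ⟨⟨0, hn⟩, hmem, ?_⟩
  have : σ i ≤ σ ⟨0, hn⟩ := hσ (Fin.mk_le_of_le_val i.val.zero_le)
  exact pow_pos (((hσ0 i).lt_of_ne' hi).trans_le this) 2

section InnerProductSpace

variable {𝕜 E F : Type*} [RCLike 𝕜] [NormedAddCommGroup E] [InnerProductSpace 𝕜 E]
  [NormedAddCommGroup F] [InnerProductSpace 𝕜 F]

theorem Orthonormal.sum_norm_starProjection_sq_le_finrank {ι : Type*} [Fintype ι] {f : ι → E}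
    (hf : Orthonormal 𝕜 f) (K : Submodule 𝕜 E) [FiniteDimensional 𝕜 K] :
    ∑ i, ‖K.starProjection (f i)‖ ^ 2 ≤ Module.finrank 𝕜 K := by
  set b := stdOrthonormalBasis 𝕜 K
  have hproj (x : E) : ‖K.starProjection x‖ ^ 2 = ∑ j, ‖⟪x, (b j : E)⟫_𝕜‖ ^ 2 := by
    rw [Submodule.starProjection_apply, Submodule.norm_coe,
      ← b.sum_sq_norm_inner_right (K.orthogonalProjectionOnto x)]
    simp_rw [Submodule.inner_orthogonalProjectionOnto_eq_of_mem_left, norm_inner_symm]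
  calc ∑ i, ‖K.starProjection (f i)‖ ^ 2 = ∑ j, ∑ i, ‖⟪f i, (b j : E)⟫_𝕜‖ ^ 2 := by
        simp_rw [hproj]; exact sum_comm
    _ ≤ ∑ j, ‖(b j : E)‖ ^ 2 := sum_le_sum fun j _ => hf.sum_inner_products_le _
    _ = Module.finrank 𝕜 K := by simp only [Submodule.norm_coe, b.orthonormal.1]; simp

theorem Orthonormal.sum_mul_re_inner_apply_le [FiniteDimensional 𝕜 E] {n r : ℕ} {f : Fin n → E}
    (hf : Orthonormal 𝕜 f) (T : F →ₗ[𝕜] E) (hT : Module.finrank 𝕜 (LinearMap.range T) ≤ r)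
    (e : Fin n → F) {σ : Fin n → ℝ} (hσ : Antitone σ) (hσ0 : ∀ i, 0 ≤ σ i) :
    ∑ i, σ i * RCLike.re ⟪f i, T (e i)⟫_𝕜 ≤
      √(∑ i ∈ univ.filter (fun i : Fin n => (i : ℕ) < r), σ i ^ 2) * √(∑ i, ‖T (e i)‖ ^ 2) := by
  set K := LinearMap.range T
  have hinner (i : Fin n) : ⟪f i, T (e i)⟫_𝕜 = ⟪K.starProjection (f i), T (e i)⟫_𝕜 := by
    rw [Submodule.inner_starProjection_left_eq_right,
      Submodule.starProjection_eq_self_iff.mpr (LinearMap.mem_range_self T _)]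
  have hweights : ∑ i, σ i ^ 2 * ‖K.starProjection (f i)‖ ^ 2 ≤
      ∑ i ∈ univ.filter (fun i : Fin n => (i : ℕ) < r), σ i ^ 2 := by
    refine Antitone.sum_mul_le_sum_filter_lt (fun i j hij => ?_) (fun i => sq_nonneg _)
      (fun i => sq_nonneg _) (fun i => ?_) ?_
    · exact pow_le_pow_left₀ (hσ0 j) (hσ hij) 2
    · simpa [hf.1 i] using
        pow_le_pow_left₀ (norm_nonneg _) (K.norm_starProjection_apply_le (f i)) 2
    · exact (hf.sum_norm_starProjection_sq_le_finrank K).trans (by exact_mod_cast hT)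
  calc ∑ i, σ i * RCLike.re ⟪f i, T (e i)⟫_𝕜
      ≤ ∑ i, σ i * ‖K.starProjection (f i)‖ * ‖T (e i)‖ := by
        refine sum_le_sum fun i _ => ?_
        rw [mul_assoc, hinner]
        exact mul_le_mul_of_nonneg_left
          ((RCLike.re_le_norm _).trans (norm_inner_le_norm _ _)) (hσ0 i)
    _ ≤ √(∑ i, (σ i * ‖K.starProjection (f i)‖) ^ 2) * √(∑ i, ‖T (e i)‖ ^ 2) :=
        Real.sum_mul_le_sqrt_mul_sqrt _ _ _
    _ ≤ _ := by
        gcongr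
        simpa only [mul_pow] using hweights

end InnerProductSpace

section Matrix

variable {𝕜 ι m n : Type*} [RCLike 𝕜]

def outerSum (s : Finset ι) (τ : ι → 𝕜) (u : ι → m → 𝕜) (v : ι → n → 𝕜) : Matrix m n 𝕜 :=
  Matrix.of fun a b => ∑ i ∈ s, τ i * u i a * conj (v i b)

theorem rank_outerSum_le [Fintype m] [Fintype n] (s : Finset ι) (τ : ι → 𝕜) (u : ι → m → 𝕜)
    (v : ι → n → 𝕜) :
    (outerSum s τ u v).rank ≤ #s := by
  have hfactor : outerSum s τ u v =
      (Matrix.of fun a (i : s) => τ i * u i a) * Matrix.of fun (i : s) b => conj (v i b) := by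
    ext a b
    simp only [outerSum, Matrix.of_apply, Matrix.mul_apply, mul_assoc]
    exact (sum_coe_sort s _).symm
  rw [hfactor]
  exact (Matrix.rank_mul_le_left _ _).trans ((Matrix.rank_le_card_width _).trans (by simp))

theorem toEuclideanLin_outerSum_apply [Fintype n] [DecidableEq n] (s : Finset ι) (τ : ι → 𝕜)
    (u : ι → m → 𝕜) (v : ι → n → 𝕜) (x : EuclideanSpace 𝕜 n) :
    (outerSum s τ u v).toEuclideanLin x =
      ∑ i ∈ s, (τ i * ⟪toLp 2 (v i), x⟫_𝕜) • toLp 2 (u i) := by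
  ext a
  simp only [outerSum, Matrix.ofLp_toLpLin, Matrix.toLin'_apply, Matrix.mulVec, dotProduct,
    Matrix.of_apply, sum_mul, EuclideanSpace.inner_eq_star_dotProduct, Pi.star_apply,
    RCLike.star_def, mul_sum, WithLp.ofLp_sum, WithLp.ofLp_smul, Finset.sum_apply, Pi.smul_apply,
    smul_eq_mul]
  rw [sum_comm]
  exact sum_congr rfl fun i _ => sum_congr rfl fun b _ => by ring

theorem orthonormal_toLp_of_sum_conj_mul [Fintype m] [DecidableEq ι] {u : ι → m → 𝕜}
    (hu : ∀ i i', ∑ a, conj (u i a) * u i' a = if i = i' then 1 else 0) :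
    Orthonormal 𝕜 fun i => toLp 2 (u i) := by
  rw [orthonormal_iff_ite]
  intro i j
  simpa [EuclideanSpace.inner_toLp_toLp, dotProduct, mul_comm] using hu i j

variable [Fintype m] [Fintype n] [DecidableEq n]

theorem Orthonormal.sum_norm_toEuclideanLin_sq_le [Fintype ι] {e : ι → EuclideanSpace 𝕜 n}
    (he : Orthonormal 𝕜 e) (D : Matrix m n 𝕜) :
    ∑ i, ‖D.toEuclideanLin (e i)‖ ^ 2 ≤ ∑ a, ∑ b, ‖D a b‖ ^ 2 := by
  have hrow (a : m) (x : EuclideanSpace 𝕜 n) :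
      ‖D.toEuclideanLin x a‖ = ‖⟪x, toLp 2 (star (D a))⟫_𝕜‖ := by
    rw [EuclideanSpace.inner_eq_star_dotProduct, ← RCLike.norm_conj]
    congr 1
    simp [Matrix.mulVec, dotProduct]
  calc ∑ i, ‖D.toEuclideanLin (e i)‖ ^ 2
      = ∑ a, ∑ i, ‖⟪e i, toLp 2 (star (D a))⟫_𝕜‖ ^ 2 := by
        simp_rw [EuclideanSpace.norm_sq_eq, hrow]
        exact sum_comm
    _ ≤ ∑ a, ‖toLp 2 (star (D a))‖ ^ 2 := sum_le_sum fun a _ => he.sum_inner_products_le _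
    _ = ∑ a, ∑ b, ‖D a b‖ ^ 2 := by simp [EuclideanSpace.norm_sq_eq]

theorem sum_conj_mul_outerSum (D : Matrix m n 𝕜) (s : Finset ι) (τ : ι → 𝕜) (u : ι → m → 𝕜)
    (v : ι → n → 𝕜) :
    ∑ a, ∑ b, conj (D a b) * outerSum s τ u v a b =
      ∑ i ∈ s, τ i * conj ⟪toLp 2 (u i), D.toEuclideanLin (toLp 2 (v i))⟫_𝕜 := by
  simp only [outerSum, Matrix.of_apply, EuclideanSpace.inner_toLp_toLp, Matrix.toLpLin_toLp,
    Matrix.toLin'_apply, dotProduct, Matrix.mulVec, map_sum, map_mul, Pi.star_apply, mul_sum,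
    sum_mul]
  refine (sum_congr rfl fun a _ => sum_comm).trans (sum_comm.trans <|
    sum_congr rfl fun i _ => sum_congr rfl fun a _ => sum_congr rfl fun b _ => ?_)
  simp only [RCLike.star_def, RCLike.conj_conj]
  ring

theorem inner_toEuclideanLin_outerSum_apply_self [DecidableEq ι] {u : ι → m → 𝕜}
    {v : ι → n → 𝕜} (hu : Orthonormal 𝕜 fun i => toLp 2 (u i))
    (hv : Orthonormal 𝕜 fun i => toLp 2 (v i)) (s : Finset ι) (τ : ι → 𝕜) (i : ι) :
    ⟪toLp 2 (u i), (outerSum s τ u v).toEuclideanLin (toLp 2 (v i))⟫_𝕜 =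
      if i ∈ s then τ i else 0 := by
  simp_rw [toEuclideanLin_outerSum_apply, inner_sum, inner_smul_right,
    orthonormal_iff_ite.mp hu, orthonormal_iff_ite.mp hv]
  simp

theorem sum_conj_outerSum_mul_outerSum [DecidableEq ι] {u : ι → m → 𝕜} {v : ι → n → 𝕜}
    (hu : Orthonormal 𝕜 fun i => toLp 2 (u i)) (hv : Orthonormal 𝕜 fun i => toLp 2 (v i))
    (s t : Finset ι) (τ τ' : ι → 𝕜) :
    ∑ a, ∑ b, conj (outerSum s τ u v a b) * outerSum t τ' u v a b =
      ∑ i ∈ s ∩ t, conj (τ i) * τ' i := by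
  simp_rw [sum_conj_mul_outerSum, inner_toEuclideanLin_outerSum_apply_self hu hv, apply_ite conj,
    map_zero, mul_ite, mul_zero, ← sum_filter, filter_mem_eq_inter, inter_comm t s, mul_comm]

theorem sum_norm_sq_outerSum [DecidableEq ι] {u : ι → m → 𝕜} {v : ι → n → 𝕜}
    (hu : Orthonormal 𝕜 fun i => toLp 2 (u i)) (hv : Orthonormal 𝕜 fun i => toLp 2 (v i))
    (s : Finset ι) (τ : ι → 𝕜) :
    ∑ a, ∑ b, ‖outerSum s τ u v a b‖ ^ 2 = ∑ i ∈ s, ‖τ i‖ ^ 2 := by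
  apply RCLike.ofReal_injective (K := 𝕜)
  push_cast
  simp_rw [← RCLike.conj_mul, sum_conj_outerSum_mul_outerSum hu hv, inter_self]

theorem re_sum_conj_outerSum_mul_outerSum_ofReal [DecidableEq ι] {u : ι → m → 𝕜}
    {v : ι → n → 𝕜} (hu : Orthonormal 𝕜 fun i => toLp 2 (u i))
    (hv : Orthonormal 𝕜 fun i => toLp 2 (v i)) (s t : Finset ι) (τ τ' : ι → ℝ) :
    RCLike.re (∑ a, ∑ b, conj (outerSum s (fun i => (τ i : 𝕜)) u v a b) *
      outerSum t (fun i => (τ' i : 𝕜)) u v a b) = ∑ i ∈ s ∩ t, τ i * τ' i := by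
  simp_rw [sum_conj_outerSum_mul_outerSum hu hv, RCLike.conj_ofReal, ← RCLike.ofReal_mul,
    ← RCLike.ofReal_sum, RCLike.ofReal_re]

theorem re_sum_conj_mul_outerSum_le {k r : ℕ} {u : Fin k → m → 𝕜} {v : Fin k → n → 𝕜}
    (hu : Orthonormal 𝕜 fun i => toLp 2 (u i)) (hv : Orthonormal 𝕜 fun i => toLp 2 (v i))
    {σ : Fin k → ℝ} (hσ : Antitone σ) (hσ0 : ∀ i, 0 ≤ σ i) {D : Matrix m n 𝕜}
    (hD : D.rank ≤ r) :
    RCLike.re (∑ a, ∑ b, conj (D a b) * outerSum univ (fun i => (σ i : 𝕜)) u v a b) ≤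
      √(∑ i ∈ univ.filter (fun i : Fin k => (i : ℕ) < r), σ i ^ 2) *
        √(∑ a, ∑ b, ‖D a b‖ ^ 2) := by
  have hrank : Module.finrank 𝕜 (LinearMap.range D.toEuclideanLin) ≤ r :=
    (D.rank_eq_finrank_range_toLin (PiLp.basisFun 2 𝕜 m) (PiLp.basisFun 2 𝕜 n)).symm.trans_le hD
  rw [sum_conj_mul_outerSum, map_sum]
  calc ∑ i, RCLike.re ((σ i : 𝕜) * conj ⟪toLp 2 (u i), D.toEuclideanLin (toLp 2 (v i))⟫_𝕜)
      = ∑ i, σ i * RCLike.re ⟪toLp 2 (u i), D.toEuclideanLin (toLp 2 (v i))⟫_𝕜 := by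
        simp only [RCLike.re_ofReal_mul, RCLike.conj_re]
    _ ≤ √(∑ i ∈ univ.filter (fun i : Fin k => (i : ℕ) < r), σ i ^ 2) *
          √(∑ i, ‖D.toEuclideanLin (toLp 2 (v i))‖ ^ 2) :=
        hu.sum_mul_re_inner_apply_le _ hrank _ hσ hσ0
    _ ≤ _ := by
        gcongr
        exact hv.sum_norm_toEuclideanLin_sq_le D

end Matrix

/-- the normalized truncated rank-r SVD maximizes Re(tr(Dᴴ Y)) over matrices D
with rank at most r and unit Frobenius norm, with maximal value √(σ₁²+...+σ_r²). -/
theorem stmt6 (p q r : ℕ) (hr1 : 1 ≤ r) (hr : r ≤ min p q)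
    (u : Fin (min p q) → Fin p → ℂ) (v : Fin (min p q) → Fin q → ℂ)
    (hu : ∀ i i', ∑ a, (starRingEnd ℂ) (u i a) * u i' a = if i = i' then 1 else 0)
    (hv : ∀ i i', ∑ b, (starRingEnd ℂ) (v i b) * v i' b = if i = i' then 1 else 0)
    (σ : Fin (min p q) → ℝ) (hdec : ∀ i j, i ≤ j → σ j ≤ σ i) (hnn : ∀ i, 0 ≤ σ i)
    (Y : Matrix (Fin p) (Fin q) ℂ)
    (hY : Y = fun a b => ∑ i, (σ i : ℂ) * u i a * (starRingEnd ℂ) (v i b))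
    (hYne : Y ≠ 0)
    (s : ℝ)
    (hs : s = Real.sqrt (∑ i ∈ Finset.univ.filter (fun i : Fin (min p q) => (i : ℕ) < r), σ i ^ 2))
    (Dhat : Matrix (Fin p) (Fin q) ℂ)
    (hDhat : Dhat = fun a b =>
      (∑ i ∈ Finset.univ.filter (fun i : Fin (min p q) => (i : ℕ) < r),
        (σ i : ℂ) * u i a * (starRingEnd ℂ) (v i b)) / (s : ℂ)) :
    Dhat.rank ≤ r ∧ (∑ a, ∑ b, ‖Dhat a b‖ ^ 2 = 1) ∧
      (∑ a, ∑ b, (starRingEnd ℂ) (Dhat a b) * Y a b).re = s ∧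
      ∀ D : Matrix (Fin p) (Fin q) ℂ, D.rank ≤ r → (∑ a, ∑ b, ‖D a b‖ ^ 2 = 1) →
        (∑ a, ∑ b, (starRingEnd ℂ) (D a b) * Y a b).re ≤ s := by
  set F := univ.filter fun i : Fin (min p q) => (i : ℕ) < r
  have hU := orthonormal_toLp_of_sum_conj_mul hu
  have hV := orthonormal_toLp_of_sum_conj_mul hv
  have hY' : Y = outerSum univ (fun i => (σ i : ℂ)) u v := hY
  have hDhat' : Dhat = outerSum F (fun i => ((σ i / s : ℝ) : ℂ)) u v := by
    rw [hDhat]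
    ext a b
    simp only [outerSum, Matrix.of_apply, sum_div]
    exact sum_congr rfl fun i _ => by push_cast; ring
  have hs_sq : ∑ i ∈ F, σ i ^ 2 = s ^ 2 := by
    rw [hs, Real.sq_sqrt (sum_nonneg fun i _ => sq_nonneg _)]
  have hs0 : s ≠ 0 := by
    refine hs ▸ (Real.sqrt_pos.mpr (sum_filter_lt_sq_pos hdec hnn hr1 ?_)).ne'
    rintro rfl
    exact hYne (by rw [hY]; ext; simp)
  refine ⟨?_, ?_, ?_, fun D hD hD1 => ?_⟩
  · rw [hDhat']
    exact (rank_outerSum_le _ _ _ _).trans (by rw [Fin.card_filter_val_lt]; omega)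
  · simp_rw [hDhat', sum_norm_sq_outerSum hU hV, Complex.norm_real, Real.norm_eq_abs, sq_abs,
      div_pow]
    rw [← sum_div, hs_sq, div_self (pow_ne_zero 2 hs0)]
  · rw [hDhat', hY']
    refine (re_sum_conj_outerSum_mul_outerSum_ofReal hU hV F univ (fun i => σ i / s) σ).trans ?_
    simp_rw [inter_univ, div_mul_eq_mul_div, ← sq]
    rw [← sum_div, hs_sq, sq, mul_self_div_self]
  · have h := re_sum_conj_mul_outerSum_le hU hV hdec hnn hD
    rw [hD1, Real.sqrt_one, mul_one, ← hs] at h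
    rwa [hY']
end

section
/- Let Y ∈ ℂ^{p×q} have SVD Y = U Σ V^H with singular values σ_i, and let τ > 0. Then the matrix SVT_τ(Y) = Σ_i (σ_i − τ)⁺ u_i v_i^H, where u_i, v_i are the columns of U and V and (x)⁺ = max(x,0), is the unique minimizer of the function X ↦ (1/2)‖Y − X‖_F² + τ ‖X‖_* over ℂ^{p×q}. -/
/-!
The residual `W = Y - X̂ = U diag(min(σᵢ, τ)) Vᴴ` has spectral norm at most `τ`. By the duality
between the spectral and the nuclear norm, `Re ⟨W, X⟩ ≤ τ ‖X‖_*` for every `X`, while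
`⟨W, X̂⟩ = τ ∑ (σᵢ - τ)⁺ ≥ τ ‖X̂‖_*`; that is, `W` is a subgradient of `τ ‖·‖_*` at `X̂`.
Expanding `‖Y - X‖_F² = ‖W - (X - X̂)‖_F²` then gives `F X ≥ F X̂ + ½ ‖X - X̂‖_F²`, which is
minimality and uniqueness at once.

The duality is read off a singular value decomposition `X = Q Σ Bᴴ`, where `B` diagonalises
`Xᴴ X` and `Q` is `X B` with its nonzero columns normalised: then `Re ⟨G, X⟩ = ∑ⱼ sⱼ Re (Bᴴ Gᴴ Q)ⱼⱼ`
is at most `‖G‖ ∑ⱼ sⱼ`, with equality for `G = Q Bᴴ`.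
-/

open Finset

/-- Nuclear norm: sum of singular values, i.e. sum of square roots of the eigenvalues of XᴴX. -/
noncomputable def nuclearNorm {p q : ℕ} (X : Matrix (Fin p) (Fin q) ℂ) : ℝ :=
  ∑ i, Real.sqrt ((Matrix.isHermitian_conjTranspose_mul_self X).eigenvalues i)

open scoped Matrix.Norms.L2Operator ComplexOrder

namespace Matrix

variable {𝕜 : Type*} [RCLike 𝕜] {m n k : Type*} [Fintype m] [Fintype n] [Fintype k]

lemma norm_apply_le_l2_opNorm [DecidableEq n] (A : Matrix m n 𝕜) (i : m) (j : n) :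
    ‖A i j‖ ≤ ‖A‖ := by
  have h := (PiLp.norm_apply_le ((EuclideanSpace.equiv m 𝕜).symm (A *ᵥ Pi.single j 1)) i).trans
    (l2_opNorm_mulVec A (EuclideanSpace.single j 1))
  have hentry : ((EuclideanSpace.equiv m 𝕜).symm (A *ᵥ Pi.single j 1)).ofLp i = A i j := by
    simp only [PiLp.continuousLinearEquiv_symm_apply, mulVec_single_one]; rfl
  rwa [PiLp.norm_single, norm_one, mul_one, hentry] at h

lemma l2_opNorm_le_one_of_conjTranspose_mul_self_eq_diagonal [DecidableEq n] {A : Matrix m n 𝕜}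
    {d : n → 𝕜} (hA : Aᴴ * A = diagonal d) (hd : ∀ i, ‖d i‖ ≤ 1) : ‖A‖ ≤ 1 := by
  have h : ‖A‖ * ‖A‖ ≤ 1 := by
    rw [← l2_opNorm_conjTranspose_mul_self, hA, l2_opNorm_diagonal]
    exact (pi_norm_le_iff_of_nonneg zero_le_one).mpr hd
  nlinarith [norm_nonneg A]

lemma l2_opNorm_le_one_of_conjTranspose_mul_self_eq_one [DecidableEq n] {A : Matrix m n 𝕜}
    (hA : Aᴴ * A = 1) : ‖A‖ ≤ 1 :=
  l2_opNorm_le_one_of_conjTranspose_mul_self_eq_diagonal (hA.trans diagonal_one.symm)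
    fun _ => norm_one.le

omit [Fintype n] in
lemma conjTranspose_diagonal_ofReal [DecidableEq n] (r : n → ℝ) :
    (diagonal fun i => (r i : 𝕜))ᴴ = diagonal fun i => (r i : 𝕜) := by
  simp [diagonal_conjTranspose]

lemma diagonal_ofReal_mul_diagonal_ofReal [DecidableEq n] (r r' : n → ℝ) :
    (diagonal fun i => (r i : 𝕜)) * (diagonal fun i => (r' i : 𝕜)) =
      diagonal fun i => ((r i * r' i : ℝ) : 𝕜) := by
  simp [diagonal_mul_diagonal]

lemma conjTranspose_mul_diagonal_ofReal_mul_self [DecidableEq n] (A : Matrix m n 𝕜)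
    (r : n → ℝ) :
    (A * diagonal fun i => (r i : 𝕜))ᴴ * (A * diagonal fun i => (r i : 𝕜)) =
      (diagonal fun i => (r i : 𝕜)) * (Aᴴ * A) * diagonal fun i => (r i : 𝕜) := by
  rw [conjTranspose_mul, conjTranspose_diagonal_ofReal]
  simp only [Matrix.mul_assoc]

lemma re_trace_conjTranspose_mul_le [DecidableEq n] [DecidableEq k] (G : Matrix m n 𝕜)
    {Q : Matrix m k 𝕜} {R : Matrix n k 𝕜} {s : k → ℝ} (hQ : ‖Q‖ ≤ 1) (hR : ‖R‖ ≤ 1)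
    (hs : ∀ i, 0 ≤ s i) :
    RCLike.re (trace (Gᴴ * (Q * diagonal (fun i => (s i : 𝕜)) * Rᴴ))) ≤ ‖G‖ * ∑ i, s i := by
  classical
  set M : Matrix k k 𝕜 := Rᴴ * Gᴴ * Q
  have htrace : trace (Gᴴ * (Q * diagonal (fun i => (s i : 𝕜)) * Rᴴ)) = ∑ i, M i i * s i := by
    rw [← Matrix.mul_assoc, trace_mul_comm, ← Matrix.mul_assoc, ← Matrix.mul_assoc]
    simp only [trace, diag, mul_diagonal, M]
  have hM : ‖M‖ ≤ ‖G‖ :=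
    calc ‖M‖ ≤ ‖Rᴴ‖ * ‖Gᴴ‖ * ‖Q‖ := (l2_opNorm_mul _ _).trans
          (mul_le_mul_of_nonneg_right (l2_opNorm_mul _ _) (norm_nonneg _))
      _ ≤ 1 * ‖G‖ * 1 := by
          rw [l2_opNorm_conjTranspose, l2_opNorm_conjTranspose]
          gcongr
      _ = ‖G‖ := by ring
  rw [htrace, map_sum, Finset.mul_sum]
  refine Finset.sum_le_sum fun i _ => ?_
  calc RCLike.re (M i i * s i) = s i * RCLike.re (M i i) := by
        rw [RCLike.re_mul_ofReal, mul_comm]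
    _ ≤ s i * ‖M‖ := mul_le_mul_of_nonneg_left
        ((RCLike.re_le_norm _).trans (norm_apply_le_l2_opNorm M i i)) (hs i)
    _ ≤ ‖G‖ * s i := by rw [mul_comm]; exact mul_le_mul_of_nonneg_right hM (hs i)

noncomputable def singularValues [DecidableEq n] (X : Matrix m n 𝕜) (j : n) : ℝ :=
  √((isHermitian_conjTranspose_mul_self X).eigenvalues j)

lemma _root_.nuclearNorm_eq_sum_singularValues {p q : ℕ} (X : Matrix (Fin p) (Fin q) ℂ) :
    nuclearNorm X = ∑ j, X.singularValues j :=
  rfl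

lemma conjTranspose_mul_self_mul_eigenvectorUnitary [DecidableEq n] (X : Matrix m n 𝕜) :
    (X * ((isHermitian_conjTranspose_mul_self X).eigenvectorUnitary : Matrix n n 𝕜))ᴴ *
        (X * ((isHermitian_conjTranspose_mul_self X).eigenvectorUnitary : Matrix n n 𝕜)) =
      diagonal fun j => ((X.singularValues j * X.singularValues j : ℝ) : 𝕜) := by
  have h := (isHermitian_conjTranspose_mul_self X).conjStarAlgAut_star_eigenvectorUnitary
  rw [Unitary.conjStarAlgAut_star_apply, star_eq_conjTranspose] at h
  rw [conjTranspose_mul, Matrix.mul_assoc, ← Matrix.mul_assoc Xᴴ, ← Matrix.mul_assoc, h]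
  congr 1
  funext j
  simp [singularValues, Real.mul_self_sqrt (eigenvalues_conjTranspose_mul_self_nonneg X j)]

theorem exists_svd [DecidableEq n] (X : Matrix m n 𝕜) :
    ∃ (Q : Matrix m n 𝕜) (B : Matrix n n 𝕜), ‖Q‖ ≤ 1 ∧ Bᴴ * B = 1 ∧
      Qᴴ * Q * diagonal (fun j => (X.singularValues j : 𝕜)) =
        diagonal (fun j => (X.singularValues j : 𝕜)) ∧
      X = Q * diagonal (fun j => (X.singularValues j : 𝕜)) * Bᴴ := by
  set B : Matrix n n 𝕜 := ↑(isHermitian_conjTranspose_mul_self X).eigenvectorUnitary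
  set s := X.singularValues
  set A := X * B
  have hA : Aᴴ * A = diagonal fun j => ((s j * s j : ℝ) : 𝕜) :=
    conjTranspose_mul_self_mul_eigenvectorUnitary X
  set Q := A * diagonal fun j => (((s j)⁻¹ : ℝ) : 𝕜)
  have hQ : Qᴴ * Q = diagonal fun j => (((s j)⁻¹ * (s j * s j) * (s j)⁻¹ : ℝ) : 𝕜) := by
    rw [conjTranspose_mul_diagonal_ofReal_mul_self, hA, diagonal_ofReal_mul_diagonal_ofReal,
      diagonal_ofReal_mul_diagonal_ofReal]
  -- the columns of `A` with vanishing singular value are zero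
  have hA_zero : A * (diagonal fun j => ((1 - (s j)⁻¹ * s j : ℝ) : 𝕜)) = 0 := by
    rw [← conjTranspose_mul_self_eq_zero, conjTranspose_mul_diagonal_ofReal_mul_self, hA,
      diagonal_ofReal_mul_diagonal_ofReal, diagonal_ofReal_mul_diagonal_ofReal, ← diagonal_zero]
    congr 1; funext j
    rcases eq_or_ne (s j) 0 with h | h <;> simp [h]
  have hQD : Q * diagonal (fun j => (s j : 𝕜)) = A := by
    ext i j
    have := congrFun (congrFun hA_zero i) j
    rcases eq_or_ne (s j) 0 with h | h
    · simp_all [Q, mul_diagonal]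
    · simp_all [Q, mul_diagonal, Matrix.mul_assoc]
  refine ⟨Q, B, ?_, Unitary.coe_star_mul_self _, ?_, ?_⟩
  · refine l2_opNorm_le_one_of_conjTranspose_mul_self_eq_diagonal hQ fun j => ?_
    rcases eq_or_ne (s j) 0 with h | h <;> simp [h]
  · rw [hQ, diagonal_ofReal_mul_diagonal_ofReal]
    congr 1; funext j
    rcases eq_or_ne (s j) 0 with h | h <;> simp [h]
  · have hBB : B * Bᴴ = 1 := Unitary.coe_mul_star_self _
    rw [hQD, Matrix.mul_assoc, hBB, Matrix.mul_one]

lemma re_trace_conjTranspose_mul_le_sum_singularValues [DecidableEq n] (G X : Matrix m n 𝕜) :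
    RCLike.re (trace (Gᴴ * X)) ≤ ‖G‖ * ∑ j, X.singularValues j := by
  obtain ⟨Q, B, hQ, hB, -, hX⟩ := exists_svd X
  conv_lhs => rw [hX]
  exact re_trace_conjTranspose_mul_le G hQ (l2_opNorm_le_one_of_conjTranspose_mul_self_eq_one hB)
    fun j => Real.sqrt_nonneg _

lemma exists_trace_conjTranspose_mul_eq_sum_singularValues [DecidableEq n] (X : Matrix m n 𝕜) :
    ∃ G : Matrix m n 𝕜, ‖G‖ ≤ 1 ∧ trace (Gᴴ * X) = ∑ j, (X.singularValues j : 𝕜) := by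
  obtain ⟨Q, B, hQ, hB, hQQ, hX⟩ := exists_svd X
  refine ⟨Q * Bᴴ, ?_, ?_⟩
  · calc ‖Q * Bᴴ‖ ≤ ‖Q‖ * ‖Bᴴ‖ := l2_opNorm_mul _ _
      _ ≤ 1 * 1 := by
          rw [l2_opNorm_conjTranspose]
          gcongr
          exact l2_opNorm_le_one_of_conjTranspose_mul_self_eq_one hB
      _ = 1 := one_mul 1
  · calc trace ((Q * Bᴴ)ᴴ * X)
        = trace (Qᴴ * Q * diagonal (fun j => (X.singularValues j : 𝕜)) * (Bᴴ * B)) := by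
          conv_lhs => rw [hX]
          simp only [conjTranspose_mul, conjTranspose_conjTranspose, Matrix.mul_assoc]
          rw [trace_mul_comm]
          simp only [Matrix.mul_assoc]
      _ = ∑ j, (X.singularValues j : 𝕜) := by rw [hB, Matrix.mul_one, hQQ, trace_diagonal]

lemma sum_singularValues_le [DecidableEq n] [DecidableEq k] {X : Matrix m n 𝕜}
    {Q : Matrix m k 𝕜} {R : Matrix n k 𝕜} {s : k → ℝ} (hQ : ‖Q‖ ≤ 1) (hR : ‖R‖ ≤ 1)
    (hs : ∀ i, 0 ≤ s i) (hX : X = Q * diagonal (fun i => (s i : 𝕜)) * Rᴴ) :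
    ∑ j, X.singularValues j ≤ ∑ i, s i := by
  obtain ⟨G, hG, hGX⟩ := exists_trace_conjTranspose_mul_eq_sum_singularValues X
  have hsum : ∑ j, X.singularValues j = RCLike.re (trace (Gᴴ * X)) := by simp [hGX]
  calc ∑ j, X.singularValues j ≤ ‖G‖ * ∑ i, s i := by
        rw [hsum, hX]; exact re_trace_conjTranspose_mul_le G hQ hR hs
    _ ≤ 1 * ∑ i, s i := by gcongr; exact Finset.sum_nonneg fun i _ => hs i
    _ = ∑ i, s i := one_mul _

lemma sum_sum_norm_sub_sq (A D : Matrix m n 𝕜) :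
    ∑ a, ∑ b, ‖A a b - D a b‖ ^ 2 =
      ∑ a, ∑ b, ‖A a b‖ ^ 2 - 2 * RCLike.re (trace (Aᴴ * D)) + ∑ a, ∑ b, ‖D a b‖ ^ 2 := by
  have htrace : RCLike.re (trace (Aᴴ * D)) = ∑ a, ∑ b, RCLike.re (inner 𝕜 (A a b) (D a b)) := by
    simp only [trace, diag, mul_apply, conjTranspose_apply, RCLike.inner_apply', map_sum,
      RCLike.star_def]
    exact Finset.sum_comm
  simp only [@norm_sub_sq 𝕜, htrace, Finset.sum_add_distrib, Finset.sum_sub_distrib,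
    Finset.mul_sum]

lemma half_sum_sum_norm_sub_sq_add_le {N : Matrix m n 𝕜 → ℝ} {τ : ℝ} {Y Z : Matrix m n 𝕜}
    (X : Matrix m n 𝕜) (hX : RCLike.re (trace ((Y - Z)ᴴ * X)) ≤ τ * N X)
    (hZ : τ * N Z ≤ RCLike.re (trace ((Y - Z)ᴴ * Z))) :
    1 / 2 * ∑ a, ∑ b, ‖Y a b - Z a b‖ ^ 2 + τ * N Z + 1 / 2 * ∑ a, ∑ b, ‖X a b - Z a b‖ ^ 2 ≤
      1 / 2 * ∑ a, ∑ b, ‖Y a b - X a b‖ ^ 2 + τ * N X := by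
  have hexpand := sum_sum_norm_sub_sq (Y - Z) (X - Z)
  simp only [sub_apply, sub_sub_sub_cancel_right, Matrix.mul_sub, trace_sub, map_sub] at hexpand
  linarith

lemma eq_of_sum_sum_norm_sub_sq_nonpos {A B : Matrix m n 𝕜}
    (h : ∑ a, ∑ b, ‖A a b - B a b‖ ^ 2 ≤ 0) : A = B := by
  have hrows := (Finset.sum_eq_zero_iff_of_nonneg fun a _ =>
    Finset.sum_nonneg fun b _ => by positivity).mp
      (h.antisymm (Finset.sum_nonneg fun a _ => Finset.sum_nonneg fun b _ => by positivity))
  ext a b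
  have := (Finset.sum_eq_zero_iff_of_nonneg fun b _ => by positivity).mp
    (hrows a (Finset.mem_univ a)) b (Finset.mem_univ b)
  simpa [sub_eq_zero] using this

omit [Fintype k] in
lemma conjTranspose_mul_self_eq_one_of_orthonormal [DecidableEq k] {u : k → m → 𝕜}
    (hu : ∀ i i', ∑ a, (starRingEnd 𝕜) (u i a) * u i' a = if i = i' then 1 else 0) :
    (of fun a i => u i a)ᴴ * of (fun a i => u i a) = 1 := by
  ext i i'
  simpa [mul_apply, one_apply] using hu i i'

omit [Fintype m] [Fintype n] in
lemma of_sum_mul_mul_star_eq_mul_diagonal_mul [DecidableEq k] (d : k → 𝕜) (u : k → m → 𝕜)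
    (v : k → n → 𝕜) :
    (of fun a b => ∑ i, d i * u i a * (starRingEnd 𝕜) (v i b)) =
      of (fun a i => u i a) * diagonal d * (of fun b i => v i b)ᴴ := by
  ext a b
  rw [mul_apply]
  refine Finset.sum_congr rfl fun i _ => ?_
  simp only [of_apply, mul_diagonal, conjTranspose_apply, RCLike.star_def]
  ring

lemma trace_conjTranspose_mul_of_conjTranspose_mul_self_eq_one [DecidableEq k]
    {U : Matrix m k 𝕜} {V : Matrix n k 𝕜} (hU : Uᴴ * U = 1) (hV : Vᴴ * V = 1) (r r' : k → ℝ) :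
    trace ((U * diagonal (fun i => (r i : 𝕜)) * Vᴴ)ᴴ *
        (U * diagonal (fun i => (r' i : 𝕜)) * Vᴴ)) =
      ∑ i, ((r i * r' i : ℝ) : 𝕜) := by
  simp only [conjTranspose_mul, conjTranspose_conjTranspose, conjTranspose_diagonal_ofReal,
    Matrix.mul_assoc]
  rw [trace_mul_comm]
  simp only [Matrix.mul_assoc]
  rw [hV, Matrix.mul_one, ← Matrix.mul_assoc Uᴴ, hU, Matrix.one_mul,
    diagonal_ofReal_mul_diagonal_ofReal, trace_diagonal]

theorem svt_objective_le [DecidableEq n] [DecidableEq k] {U : Matrix m k 𝕜}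
    {V : Matrix n k 𝕜} (hU : Uᴴ * U = 1) (hV : Vᴴ * V = 1) {σ : k → ℝ} (hσ : ∀ i, 0 ≤ σ i)
    {τ : ℝ} (hτ : 0 ≤ τ) {Y Z : Matrix m n 𝕜} (hY : Y = U * diagonal (fun i => (σ i : 𝕜)) * Vᴴ)
    (hZ : Z = U * diagonal (fun i => ((max (σ i - τ) 0 : ℝ) : 𝕜)) * Vᴴ) (X : Matrix m n 𝕜) :
    1 / 2 * ∑ a, ∑ b, ‖Y a b - Z a b‖ ^ 2 + τ * ∑ j, Z.singularValues j +
        1 / 2 * ∑ a, ∑ b, ‖X a b - Z a b‖ ^ 2 ≤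
      1 / 2 * ∑ a, ∑ b, ‖Y a b - X a b‖ ^ 2 + τ * ∑ j, X.singularValues j := by
  set s := fun i => max (σ i - τ) 0
  set r := fun i => σ i - s i
  have hr : ∀ i, 0 ≤ r i ∧ r i ≤ τ ∧ r i * s i = τ * s i := by
    intro i
    rcases le_total (σ i - τ) 0 with h | h
    · simp only [r, s, max_eq_right h]; have := hσ i; refine ⟨?_, ?_, ?_⟩ <;> linarith
    · simp only [r, s, max_eq_left h]; refine ⟨?_, ?_, ?_⟩ <;> linarith
  have hW : Y - Z = U * diagonal (fun i => (r i : 𝕜)) * Vᴴ := by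
    rw [hY, hZ, ← Matrix.sub_mul, ← Matrix.mul_sub, diagonal_sub]
    simp only [r, s, RCLike.ofReal_sub]
  have hU1 := l2_opNorm_le_one_of_conjTranspose_mul_self_eq_one hU
  have hV1 := l2_opNorm_le_one_of_conjTranspose_mul_self_eq_one hV
  have hWnorm : ‖Y - Z‖ ≤ τ :=
    calc ‖Y - Z‖ ≤ ‖U‖ * ‖diagonal (fun i => (r i : 𝕜))‖ * ‖Vᴴ‖ := by
          rw [hW]
          exact (l2_opNorm_mul _ _).trans
            (mul_le_mul_of_nonneg_right (l2_opNorm_mul _ _) (norm_nonneg _))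
      _ ≤ 1 * τ * 1 := by
          rw [l2_opNorm_conjTranspose, l2_opNorm_diagonal]
          gcongr
          refine (pi_norm_le_iff_of_nonneg hτ).mpr fun i => ?_
          rw [RCLike.norm_ofReal, abs_of_nonneg (hr i).1]
          exact (hr i).2.1
      _ = τ := by ring
  apply half_sum_sum_norm_sub_sq_add_le (N := fun X => ∑ j, X.singularValues j)
  · calc RCLike.re (trace ((Y - Z)ᴴ * X)) ≤ ‖Y - Z‖ * ∑ j, X.singularValues j :=
          re_trace_conjTranspose_mul_le_sum_singularValues _ _
      _ ≤ τ * ∑ j, X.singularValues j :=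
          mul_le_mul_of_nonneg_right hWnorm (Finset.sum_nonneg fun j _ => Real.sqrt_nonneg _)
  · calc τ * ∑ j, Z.singularValues j ≤ τ * ∑ i, s i :=
          mul_le_mul_of_nonneg_left
            (sum_singularValues_le hU1 hV1 (fun i => le_max_right _ _) hZ) hτ
      _ = RCLike.re (trace ((Y - Z)ᴴ * Z)) := by
          rw [hW, hZ, trace_conjTranspose_mul_of_conjTranspose_mul_self_eq_one hU hV, map_sum,
            Finset.mul_sum]
          exact Finset.sum_congr rfl fun i _ => by rw [RCLike.ofReal_re, (hr i).2.2]

end Matrix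

open Matrix

theorem stmt9_general (p q : ℕ)
    (u : Fin (min p q) → Fin p → ℂ) (v : Fin (min p q) → Fin q → ℂ)
    (hu : ∀ i i', ∑ a, (starRingEnd ℂ) (u i a) * u i' a = if i = i' then 1 else 0)
    (hv : ∀ i i', ∑ b, (starRingEnd ℂ) (v i b) * v i' b = if i = i' then 1 else 0)
    (σ : Fin (min p q) → ℝ) (hnn : ∀ i, 0 ≤ σ i)
    (Y : Matrix (Fin p) (Fin q) ℂ)
    (hY : Y = fun a b => ∑ i, (σ i : ℂ) * u i a * (starRingEnd ℂ) (v i b))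
    (τ : ℝ) (hτ : 0 < τ)
    (Xhat : Matrix (Fin p) (Fin q) ℂ)
    (hXhat : Xhat = fun a b => ∑ i, ((max (σ i - τ) 0 : ℝ) : ℂ) * u i a * (starRingEnd ℂ) (v i b))
    (F : Matrix (Fin p) (Fin q) ℂ → ℝ)
    (hF : F = fun X => (1 / 2) * (∑ a, ∑ b, ‖Y a b - X a b‖ ^ 2) + τ * nuclearNorm X) :
    ∀ X : Matrix (Fin p) (Fin q) ℂ, F Xhat ≤ F X ∧ (F X = F Xhat → X = Xhat) := by
  intro X
  have hle := svt_objective_le (conjTranspose_mul_self_eq_one_of_orthonormal hu)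
    (conjTranspose_mul_self_eq_one_of_orthonormal hv) hnn hτ.le
    (hY.trans (of_sum_mul_mul_star_eq_mul_diagonal_mul _ u v))
    (hXhat.trans (of_sum_mul_mul_star_eq_mul_diagonal_mul _ u v)) X
  have hdist : 0 ≤ ∑ a, ∑ b, ‖X a b - Xhat a b‖ ^ 2 :=
    Finset.sum_nonneg fun a _ => Finset.sum_nonneg fun b _ => by positivity
  subst hF
  simp only [nuclearNorm_eq_sum_singularValues]
  exact ⟨by linarith, fun hFX => eq_of_sum_sum_norm_sub_sq_nonpos (by linarith)⟩

/-- singular value thresholding is the unique minimizer of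
X ↦ (1/2)‖Y − X‖_F² + τ‖X‖_*. -/
theorem stmt9 (p q : ℕ)
    (u : Fin (min p q) → Fin p → ℂ) (v : Fin (min p q) → Fin q → ℂ)
    (hu : ∀ i i', ∑ a, (starRingEnd ℂ) (u i a) * u i' a = if i = i' then 1 else 0)
    (hv : ∀ i i', ∑ b, (starRingEnd ℂ) (v i b) * v i' b = if i = i' then 1 else 0)
    (σ : Fin (min p q) → ℝ) (hdec : ∀ i j, i ≤ j → σ j ≤ σ i) (hnn : ∀ i, 0 ≤ σ i)
    (Y : Matrix (Fin p) (Fin q) ℂ)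
    (hY : Y = fun a b => ∑ i, (σ i : ℂ) * u i a * (starRingEnd ℂ) (v i b))
    (τ : ℝ) (hτ : 0 < τ)
    (Xhat : Matrix (Fin p) (Fin q) ℂ)
    (hXhat : Xhat = fun a b => ∑ i, ((max (σ i - τ) 0 : ℝ) : ℂ) * u i a * (starRingEnd ℂ) (v i b))
    (F : Matrix (Fin p) (Fin q) ℂ → ℝ)
    (hF : F = fun X => (1 / 2) * (∑ a, ∑ b, ‖Y a b - X a b‖ ^ 2) + τ * nuclearNorm X) :
    ∀ X : Matrix (Fin p) (Fin q) ℂ, F Xhat ≤ F X ∧ (F X = F Xhat → X = Xhat) :=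
  stmt9_general p q u v hu hv σ hnn Y hY τ hτ Xhat hXhat F hF
end

section
/- Let Y ∈ ℂ^{p×q} have SVD Y = U Σ V^H with singular values σ_i, and let λ > 0. Then the matrix X̂ = Σ_i σ_i 𝟙{σ_i > √(2λ)} u_i v_i^H obtained by hard-thresholding the singular values at level √(2λ) is a global minimizer of the function X ↦ (1/2)‖Y − X‖_F² + λ rank(X) over ℂ^{p×q}. -/
/-!
Write `Y = ∑ σᵢ uᵢ vᵢᴴ`. Given any `X`, let `P` be the orthogonal projection onto the column
space of `X` and `tᵢ = ‖P uᵢ‖² ∈ [0, 1]`. The columns of `X` lie in the range of `P`, so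
`‖Y - X‖_F² ≥ ‖Y - P Y‖_F² = ∑ σᵢ² (1 - tᵢ)`, while Bessel's inequality gives `∑ tᵢ ≤ rank X`.
Hence the objective at `X` is at least `∑ (σᵢ² (1 - tᵢ) / 2 + λ tᵢ) ≥ ∑ min (σᵢ² / 2) λ`, and hard
thresholding attains this bound: it pays `λ` for each kept and `σᵢ² / 2` for each discarded
singular value.
-/

open Finset Module Submodule
open scoped ComplexConjugate InnerProductSpace

theorem Submodule.norm_sq_sub_norm_sq_starProjection_le {𝕜 E : Type*} [RCLike 𝕜]
    [NormedAddCommGroup E] [InnerProductSpace 𝕜 E] (K : Submodule 𝕜 E)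
    [K.HasOrthogonalProjection] (y : E) {x : E} (hx : x ∈ K) :
    ‖y‖ ^ 2 - ‖K.starProjection y‖ ^ 2 ≤ ‖y - x‖ ^ 2 := by
  have hy := norm_add_sq_eq_norm_sq_add_norm_sq_of_inner_eq_zero _ _
    (K.starProjection_inner_eq_zero y _ (K.starProjection_apply_mem y))
  have hyx := norm_add_sq_eq_norm_sq_add_norm_sq_of_inner_eq_zero _ _
    (K.starProjection_inner_eq_zero y _ (K.sub_mem (K.starProjection_apply_mem y) hx))
  rw [sub_add_cancel] at hy
  rw [sub_add_sub_cancel] at hyx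
  nlinarith [mul_self_nonneg ‖K.starProjection y - x‖]

theorem Orthonormal.sum_norm_sq_starProjection_le {𝕜 E ι : Type*} [RCLike 𝕜]
    [NormedAddCommGroup E] [InnerProductSpace 𝕜 E] [Fintype ι] {U : ι → E}
    (hU : Orthonormal 𝕜 U) (K : Submodule 𝕜 E) [FiniteDimensional 𝕜 K] :
    ∑ i, ‖K.starProjection (U i)‖ ^ 2 ≤ finrank 𝕜 K := by
  set b := stdOrthonormalBasis 𝕜 K
  have hproj (x : E) : ‖K.starProjection x‖ ^ 2 = ∑ k, ‖⟪(b k : E), x⟫_𝕜‖ ^ 2 := by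
    have := b.sum_sq_norm_inner_right (K.orthogonalProjectionOnto x)
    simp only [inner_orthogonalProjectionOnto_eq_of_mem_left] at this
    rw [starProjection_apply, this]
    rfl
  calc ∑ i, ‖K.starProjection (U i)‖ ^ 2 = ∑ k, ∑ i, ‖⟪U i, (b k : E)⟫_𝕜‖ ^ 2 := by
        simp_rw [hproj]
        rw [sum_comm]
        simp_rw [norm_inner_symm]
    _ ≤ ∑ _k, 1 := sum_le_sum fun k _ => by
        have hbk : ‖(b k : E)‖ = 1 := b.orthonormal.1 k
        simpa [hbk] using hU.sum_inner_products_le (b k : E) (s := univ)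
    _ = finrank 𝕜 K := by simp

theorem Orthonormal.sum_norm_sq_sum_conj_smul {ι n E : Type*} [Fintype ι] [Fintype n]
    [NormedAddCommGroup E] [InnerProductSpace ℂ E] {v : ι → EuclideanSpace ℂ n}
    (hv : Orthonormal ℂ v) (z : ι → E) :
    ∑ b, ‖∑ i, conj (v i b) • z i‖ ^ 2 = ∑ i, ‖z i‖ ^ 2 := by
  classical
  apply RCLike.ofReal_injective (K := ℂ)
  simp only [RCLike.ofReal_sum, RCLike.ofReal_pow, ← inner_self_eq_norm_sq_to_K, sum_inner,
    inner_sum, inner_smul_left, inner_smul_right, Complex.conj_conj, mul_sum]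
  calc ∑ b, ∑ i, ∑ j, conj (v i b) * (v j b * ⟪z j, z i⟫_ℂ)
      = ∑ i, ∑ j, ⟪v i, v j⟫_ℂ * ⟪z j, z i⟫_ℂ := by
        rw [sum_comm]
        refine sum_congr rfl fun i _ => ?_
        rw [sum_comm]
        simp only [PiLp.inner_apply, RCLike.inner_apply, sum_mul, mul_assoc]
        exact sum_congr rfl fun j _ => sum_congr rfl fun b _ => mul_left_comm _ _ _
    _ = ∑ i, ⟪z i, z i⟫_ℂ := by
        simp [orthonormal_iff_ite.1 hv]

theorem orthonormal_toLp_iff {ι m : Type*} [Fintype m] [DecidableEq ι] {u : ι → m → ℂ} :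
    Orthonormal ℂ (fun i => (WithLp.toLp 2 (u i) : EuclideanSpace ℂ m)) ↔
      ∀ i j, ∑ a, conj (u i a) * u j a = if i = j then 1 else 0 := by
  simp [orthonormal_iff_ite, PiLp.inner_apply, mul_comm]

section

variable {ι m n E : Type*} [Fintype ι]

def svdMatrix (u : ι → m → ℂ) (v : ι → n → ℂ) (c : ι → ℂ) : Matrix m n ℂ :=
  Matrix.of fun a b => ∑ i, c i * u i a * conj (v i b)

def euclideanCol (M : Matrix m n ℂ) (b : n) : EuclideanSpace ℂ m :=
  WithLp.toLp 2 (M.col b)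

noncomputable def rankPenaltyObjective [Fintype m] [Fintype n] (Y : Matrix m n ℂ) (lam : ℝ)
    (X : Matrix m n ℂ) : ℝ :=
  1 / 2 * ∑ a, ∑ b, ‖Y a b - X a b‖ ^ 2 + lam * X.rank

theorem sum_sum_norm_sq_eq_sum_norm_sq_euclideanCol [Fintype m] [Fintype n]
    (M : Matrix m n ℂ) :
    ∑ a, ∑ b, ‖M a b‖ ^ 2 = ∑ b, ‖euclideanCol M b‖ ^ 2 := by
  rw [sum_comm]
  simp [EuclideanSpace.norm_sq_eq, euclideanCol]

theorem finrank_span_euclideanCol [Fintype n] (M : Matrix m n ℂ) :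
    finrank ℂ (span ℂ (Set.range (euclideanCol M))) = M.rank := by
  rw [M.rank_eq_finrank_span_cols, ← (WithLp.linearEquiv 2 ℂ (m → ℂ)).finrank_map_eq,
    map_span, ← Set.range_comp]
  rfl

theorem euclideanCol_svdMatrix (u : ι → m → ℂ) (v : ι → n → ℂ) (c : ι → ℂ) (b : n) :
    euclideanCol (svdMatrix u v c) b =
      ∑ i, conj (v i b) • c i • (WithLp.toLp 2 (u i) : EuclideanSpace ℂ m) := by
  ext a
  simp [euclideanCol, svdMatrix, mul_comm]

theorem svdMatrix_sub (u : ι → m → ℂ) (v : ι → n → ℂ) (c d : ι → ℂ) :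
    svdMatrix u v c - svdMatrix u v d = svdMatrix u v (c - d) := by
  ext a b
  simp [svdMatrix, ← sum_sub_distrib, sub_mul]

theorem rank_svdMatrix_le [Fintype n] (u : ι → m → ℂ) (v : ι → n → ℂ) (c : ι → ℂ) :
    (svdMatrix u v c).rank ≤ #{i | c i ≠ 0} := by
  have hfactor : svdMatrix u v c =
      Matrix.of (fun a i => u i a) * Matrix.of fun i b => c i * conj (v i b) := by
    ext a b
    simp only [svdMatrix, Matrix.mul_apply, Matrix.of_apply]
    exact sum_congr rfl fun i _ => by ring
  rw [hfactor]
  refine (Matrix.rank_mul_le_right _ _).trans (Matrix.rank_le_card_of_support_subset _ _ ?_)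
  intro i hi
  rw [mem_coe, mem_filter]
  refine ⟨mem_univ i, fun hci => hi ?_⟩
  ext b
  simp [hci]

theorem sum_norm_sq_map_euclideanCol_svdMatrix [Fintype n] [NormedAddCommGroup E]
    [InnerProductSpace ℂ E] {v : ι → n → ℂ}
    (hv : Orthonormal ℂ (fun i => (WithLp.toLp 2 (v i) : EuclideanSpace ℂ n)))
    (u : ι → m → ℂ) (c : ι → ℂ) (T : EuclideanSpace ℂ m →L[ℂ] E) :
    ∑ b, ‖T (euclideanCol (svdMatrix u v c) b)‖ ^ 2 =
      ∑ i, ‖c i‖ ^ 2 * ‖T (WithLp.toLp 2 (u i))‖ ^ 2 := by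
  simp_rw [euclideanCol_svdMatrix, map_sum, map_smul]
  rw [hv.sum_norm_sq_sum_conj_smul]
  simp [norm_smul, mul_pow]

theorem sum_sum_norm_sq_svdMatrix [Fintype m] [Fintype n] {u : ι → m → ℂ} {v : ι → n → ℂ}
    (hu : Orthonormal ℂ (fun i => (WithLp.toLp 2 (u i) : EuclideanSpace ℂ m)))
    (hv : Orthonormal ℂ (fun i => (WithLp.toLp 2 (v i) : EuclideanSpace ℂ n))) (c : ι → ℂ) :
    ∑ a, ∑ b, ‖svdMatrix u v c a b‖ ^ 2 = ∑ i, ‖c i‖ ^ 2 := by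
  rw [sum_sum_norm_sq_eq_sum_norm_sq_euclideanCol]
  simpa [hu.1] using sum_norm_sq_map_euclideanCol_svdMatrix hv u c (.id ℂ _)

end

section

variable {ι m n : Type*} [Fintype ι] [Fintype m] [Fintype n] {u : ι → m → ℂ} {v : ι → n → ℂ}
  (hu : Orthonormal ℂ (fun i => (WithLp.toLp 2 (u i) : EuclideanSpace ℂ m)))
  (hv : Orthonormal ℂ (fun i => (WithLp.toLp 2 (v i) : EuclideanSpace ℂ n)))
include hu hv

theorem sum_norm_sq_mul_one_sub_norm_sq_starProjection_le (c : ι → ℂ) (X : Matrix m n ℂ)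
    (K : Submodule ℂ (EuclideanSpace ℂ m)) [K.HasOrthogonalProjection]
    (hX : ∀ b, euclideanCol X b ∈ K) :
    ∑ i, ‖c i‖ ^ 2 * (1 - ‖K.starProjection (WithLp.toLp 2 (u i))‖ ^ 2) ≤
      ∑ a, ∑ b, ‖svdMatrix u v c a b - X a b‖ ^ 2 := by
  set Y := svdMatrix u v c
  calc ∑ i, ‖c i‖ ^ 2 * (1 - ‖K.starProjection (WithLp.toLp 2 (u i))‖ ^ 2)
      = ∑ b, (‖euclideanCol Y b‖ ^ 2 - ‖K.starProjection (euclideanCol Y b)‖ ^ 2) := by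
        rw [sum_sub_distrib, ← sum_sum_norm_sq_eq_sum_norm_sq_euclideanCol,
          sum_sum_norm_sq_svdMatrix hu hv,
          sum_norm_sq_map_euclideanCol_svdMatrix hv u c K.starProjection,
          ← sum_sub_distrib]
        simp [mul_sub]
    _ ≤ ∑ b, ‖euclideanCol Y b - euclideanCol X b‖ ^ 2 :=
        sum_le_sum fun b _ => K.norm_sq_sub_norm_sq_starProjection_le _ (hX b)
    _ = ∑ a, ∑ b, ‖Y a b - X a b‖ ^ 2 :=
        (sum_sum_norm_sq_eq_sum_norm_sq_euclideanCol (Y - X)).symm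

theorem sum_min_le_rankPenaltyObjective (c : ι → ℂ) {lam : ℝ} (hlam : 0 ≤ lam)
    (X : Matrix m n ℂ) :
    ∑ i, min (‖c i‖ ^ 2 / 2) lam ≤ rankPenaltyObjective (svdMatrix u v c) lam X := by
  set K := span ℂ (Set.range (euclideanCol X))
  set t := fun i => ‖K.starProjection (WithLp.toLp 2 (u i))‖ ^ 2
  have ht0 (i : ι) : 0 ≤ t i := sq_nonneg _
  have ht1 (i : ι) : t i ≤ 1 := by
    simpa [t, hu.1 i] using pow_le_pow_left₀ (norm_nonneg _)
      (K.norm_starProjection_apply_le (WithLp.toLp 2 (u i))) 2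
  have hfrob := sum_norm_sq_mul_one_sub_norm_sq_starProjection_le hu hv c X K
    fun b => subset_span (Set.mem_range_self b)
  have hrank : ∑ i, t i ≤ X.rank := by
    rw [← finrank_span_euclideanCol X]
    exact hu.sum_norm_sq_starProjection_le K
  calc ∑ i, min (‖c i‖ ^ 2 / 2) lam
      ≤ ∑ i, (‖c i‖ ^ 2 * (1 - t i) / 2 + lam * t i) := sum_le_sum fun i _ => by
        nlinarith [min_le_left (‖c i‖ ^ 2 / 2) lam, min_le_right (‖c i‖ ^ 2 / 2) lam,
          ht0 i, ht1 i]
    _ = 1 / 2 * ∑ i, ‖c i‖ ^ 2 * (1 - t i) + lam * ∑ i, t i := by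
        rw [sum_add_distrib, mul_sum, mul_sum]
        exact congrArg₂ _ (sum_congr rfl fun i _ => by ring) rfl
    _ ≤ rankPenaltyObjective (svdMatrix u v c) lam X := by
        unfold rankPenaltyObjective
        gcongr

theorem rankPenaltyObjective_svdMatrix_ite_le (c : ι → ℂ) (P : ι → Prop) [DecidablePred P]
    {lam : ℝ} (hlam : 0 ≤ lam) :
    rankPenaltyObjective (svdMatrix u v c) lam (svdMatrix u v fun i => if P i then c i else 0) ≤
      ∑ i, if P i then lam else ‖c i‖ ^ 2 / 2 := by
  have hfrob : ∑ a, ∑ b,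
      ‖svdMatrix u v c a b - svdMatrix u v (fun i => if P i then c i else 0) a b‖ ^ 2 =
        ∑ i, if P i then 0 else ‖c i‖ ^ 2 := by
    change ∑ a, ∑ b, ‖(svdMatrix u v c - svdMatrix u v _) a b‖ ^ 2 = _
    rw [svdMatrix_sub, sum_sum_norm_sq_svdMatrix hu hv]
    refine sum_congr rfl fun i _ => ?_
    split_ifs with h <;> simp [h]
  have hrank : ((svdMatrix u v fun i => if P i then c i else 0).rank : ℝ) ≤ #{i | P i} := by
    refine Nat.cast_le.2 ((rank_svdMatrix_le u v _).trans (card_le_card fun i hi => ?_))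
    simp only [mem_filter, mem_univ, true_and, ne_eq, ite_eq_right_iff, not_forall] at hi ⊢
    exact hi.1
  unfold rankPenaltyObjective
  rw [hfrob]
  calc 1 / 2 * (∑ i, if P i then 0 else ‖c i‖ ^ 2) + lam * _
      ≤ 1 / 2 * (∑ i, if P i then 0 else ‖c i‖ ^ 2) + lam * #{i | P i} := by gcongr
    _ = ∑ i, if P i then lam else ‖c i‖ ^ 2 / 2 := by
        rw [card_filter, Nat.cast_sum, mul_sum, mul_sum, ← sum_add_distrib]
        refine sum_congr rfl fun i _ => ?_
        split_ifs <;> push_cast <;> ring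

end

theorem stmt10_general (p q : ℕ)
    (u : Fin (min p q) → Fin p → ℂ) (v : Fin (min p q) → Fin q → ℂ)
    (hu : ∀ i i', ∑ a, (starRingEnd ℂ) (u i a) * u i' a = if i = i' then 1 else 0)
    (hv : ∀ i i', ∑ b, (starRingEnd ℂ) (v i b) * v i' b = if i = i' then 1 else 0)
    (σ : Fin (min p q) → ℝ) (hnn : ∀ i, 0 ≤ σ i)
    (Y : Matrix (Fin p) (Fin q) ℂ)
    (hY : Y = fun a b => ∑ i, (σ i : ℂ) * u i a * (starRingEnd ℂ) (v i b))
    (lam : ℝ) (hlam : 0 < lam)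
    (Xhat : Matrix (Fin p) (Fin q) ℂ)
    (hXhat : Xhat = fun a b => ∑ i,
      (if Real.sqrt (2 * lam) < σ i then ((σ i : ℝ) : ℂ) else 0) * u i a * (starRingEnd ℂ) (v i b))
    (F : Matrix (Fin p) (Fin q) ℂ → ℝ)
    (hF : F = fun X => (1 / 2) * (∑ a, ∑ b, ‖Y a b - X a b‖ ^ 2) + lam * (X.rank : ℝ)) :
    ∀ X : Matrix (Fin p) (Fin q) ℂ, F Xhat ≤ F X := by
  intro X
  subst hF hY hXhat
  have hu' := orthonormal_toLp_iff.2 hu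
  have hv' := orthonormal_toLp_iff.2 hv
  have hthreshold (i : Fin (min p q)) :
      (if √(2 * lam) < σ i then lam else ‖(σ i : ℂ)‖ ^ 2 / 2) = min (‖(σ i : ℂ)‖ ^ 2 / 2) lam := by
    rw [Complex.norm_of_nonneg (hnn i)]
    split_ifs with h <;> rw [Real.sqrt_lt (by positivity) (hnn i)] at h
    · exact (min_eq_right (by linarith)).symm
    · exact (min_eq_left (by linarith)).symm
  calc rankPenaltyObjective (svdMatrix u v fun i => σ i) lam
        (svdMatrix u v fun i => if √(2 * lam) < σ i then (σ i : ℂ) else 0)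
      ≤ ∑ i, if √(2 * lam) < σ i then lam else ‖(σ i : ℂ)‖ ^ 2 / 2 :=
        rankPenaltyObjective_svdMatrix_ite_le hu' hv' _ _ hlam.le
    _ = ∑ i, min (‖(σ i : ℂ)‖ ^ 2 / 2) lam := sum_congr rfl fun i _ => hthreshold i
    _ ≤ rankPenaltyObjective (svdMatrix u v fun i => σ i) lam X :=
        sum_min_le_rankPenaltyObjective hu' hv' _ hlam.le X

/-- hard-thresholding of singular values at level √(2λ) gives a global
minimizer of X ↦ (1/2)‖Y − X‖_F² + λ rank(X). -/
theorem stmt10 (p q : ℕ)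
    (u : Fin (min p q) → Fin p → ℂ) (v : Fin (min p q) → Fin q → ℂ)
    (hu : ∀ i i', ∑ a, (starRingEnd ℂ) (u i a) * u i' a = if i = i' then 1 else 0)
    (hv : ∀ i i', ∑ b, (starRingEnd ℂ) (v i b) * v i' b = if i = i' then 1 else 0)
    (σ : Fin (min p q) → ℝ) (hdec : ∀ i j, i ≤ j → σ j ≤ σ i) (hnn : ∀ i, 0 ≤ σ i)
    (Y : Matrix (Fin p) (Fin q) ℂ)
    (hY : Y = fun a b => ∑ i, (σ i : ℂ) * u i a * (starRingEnd ℂ) (v i b))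
    (lam : ℝ) (hlam : 0 < lam)
    (Xhat : Matrix (Fin p) (Fin q) ℂ)
    (hXhat : Xhat = fun a b => ∑ i,
      (if Real.sqrt (2 * lam) < σ i then ((σ i : ℝ) : ℂ) else 0) * u i a * (starRingEnd ℂ) (v i b))
    (F : Matrix (Fin p) (Fin q) ℂ → ℝ)
    (hF : F = fun X => (1 / 2) * (∑ a, ∑ b, ‖Y a b - X a b‖ ^ 2) + lam * (X.rank : ℝ)) :
    ∀ X : Matrix (Fin p) (Fin q) ℂ, F Xhat ≤ F X :=
  stmt10_general p q u v hu hv σ hnn Y hY lam hlam Xhat hXhat F hF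
end
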